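/- arXiv:2505.03462 — 2 statements merged into one kernel-verified Lean document; each statement's English description precedes it below -/
import Mathlib

section
/- Let V be a vector space over a field, Q, φ linear endomorphisms with Q ∘ Q = 0, and Φ = Q ∘ φ + φ ∘ Q. Suppose Φ is diagonalisable, i.e. V is the (internal) direct sum of the eigenspaces of Φ. Then: (i) Φ commutes with Q, so Q preserves each eigenspace of Φ; (ii) for every v ∈ ker Q there exists w ∈ ker Q ∩ ker Φ with v − w ∈ range Q; and (iii) every element of ker Φ ∩ range Q lies in Q(ker Φ). Consequently the inclusion of the subcomplex ker Φ into V induces an isomorphism on Q-cohomology, i.e. the quotient (ker Q ∩ ker Φ)/Q(ker Φ) is isomorphic to ker Q / range Q. -/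
open Module

/-- If submodules are independent and a finitely supported family of members sums to zero,
each member is zero. -/
lemma aux_indep_sum_eq_zero {K V : Type*} [Field K] [AddCommGroup V] [Module K V]
    (E : K → Submodule K V) (hE : iSupIndep E) (f : K →₀ V) (hf : ∀ μ, f μ ∈ E μ)
    (hs : f.sum (fun _ x => x) = 0) : ∀ μ, f μ = 0 := by
  classical
  intro μ
  have hsum : ∑ j ∈ f.support.erase μ, f j ∈ ⨆ (j) (_ : j ≠ μ), E j := by
    refine Submodule.sum_mem _ fun j hj => ?_
    exact Submodule.mem_iSup_of_mem j
      (Submodule.mem_iSup_of_mem (Finset.ne_of_mem_erase hj) (hf j))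
  have heq : f μ = -(∑ j ∈ f.support.erase μ, f j) := by
    by_cases hμ : μ ∈ f.support
    · have h := Finset.add_sum_erase f.support (fun j => f j) hμ
      rw [Finsupp.sum] at hs
      rw [hs] at h
      exact eq_neg_of_add_eq_zero_left h
    · rw [Finsupp.notMem_support_iff.mp hμ, Finset.erase_eq_of_notMem hμ]
      rw [Finsupp.sum] at hs
      rw [hs, neg_zero]
  have h2 : f μ ∈ ⨆ (j) (_ : j ≠ μ), E j := by
    rw [heq]; exact neg_mem hsum
  exact (Submodule.eq_bot_iff _).mp ((iSupIndep_def.mp hE μ).eq_bot) _ ⟨hf μ, h2⟩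

/-- let `Q, φ` be endomorphisms of a vector space `V` with `Q² = 0` and set
`Φ = Qφ + φQ`. If `Φ` is diagonalisable (its eigenspaces span `V`), then:
(i) `Φ` commutes with `Q`, so `Q` preserves each eigenspace of `Φ`;
(ii) every `Q`-cocycle agrees, modulo `range Q`, with a cocycle in `ker Φ`;
(iii) every element of `ker Φ ∩ range Q` lies in `Q(ker Φ)`; consequently
(iv) `(ker Q ⊓ ker Φ)/Q(ker Φ) ≅ ker Q / range Q` (the inclusion of the subcomplex
`ker Φ` is a quasi-isomorphism). -/
theorem diagonalisable_exact_operator_reduces_cohomology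
    {K V : Type*} [Field K] [AddCommGroup V] [Module K V]
    (Q φ : V →ₗ[K] V) (hQ : Q ∘ₗ Q = 0)
    (hdiag : ⨆ μ : K, Module.End.eigenspace (Q ∘ₗ φ + φ ∘ₗ Q : Module.End K V) μ = ⊤) :
    ((Q ∘ₗ φ + φ ∘ₗ Q) ∘ₗ Q = Q ∘ₗ (Q ∘ₗ φ + φ ∘ₗ Q)) ∧
    (∀ (μ : K) (v : V),
      v ∈ Module.End.eigenspace (Q ∘ₗ φ + φ ∘ₗ Q : Module.End K V) μ →
      Q v ∈ Module.End.eigenspace (Q ∘ₗ φ + φ ∘ₗ Q : Module.End K V) μ) ∧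
    (∀ v : V, Q v = 0 →
      ∃ w : V, Q w = 0 ∧ (Q ∘ₗ φ + φ ∘ₗ Q) w = 0 ∧ v - w ∈ LinearMap.range Q) ∧
    (∀ v : V, (Q ∘ₗ φ + φ ∘ₗ Q) v = 0 → v ∈ LinearMap.range Q →
      ∃ u : V, (Q ∘ₗ φ + φ ∘ₗ Q) u = 0 ∧ Q u = v) ∧
    Nonempty (
      (↥(LinearMap.ker Q ⊓ LinearMap.ker (Q ∘ₗ φ + φ ∘ₗ Q)) ⧸
        Submodule.comap (LinearMap.ker Q ⊓ LinearMap.ker (Q ∘ₗ φ + φ ∘ₗ Q)).subtype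
          (Submodule.map Q (LinearMap.ker (Q ∘ₗ φ + φ ∘ₗ Q))))
      ≃ₗ[K]
      (↥(LinearMap.ker Q) ⧸
        Submodule.comap (LinearMap.ker Q).subtype (LinearMap.range Q))) := by
  classical
  set Φ : Module.End K V := Q ∘ₗ φ + φ ∘ₗ Q with hΦdef
  set E : K → Submodule K V := fun μ => Module.End.eigenspace Φ μ with hEdef
  have hQ2 : ∀ x : V, Q (Q x) = 0 := fun x => by
    have := LinearMap.ext_iff.mp hQ x; simpa using this
  -- (i)
  have hcomm : Φ ∘ₗ Q = Q ∘ₗ Φ := by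
    ext v
    simp [hΦdef, LinearMap.comp_apply, hQ2]
  have hcomm' : ∀ v, Φ (Q v) = Q (Φ v) := fun v => LinearMap.ext_iff.mp hcomm v
  have hE : ∀ μ v, v ∈ E μ → Q v ∈ E μ := by
    intro μ v hv
    rw [hEdef, Module.End.mem_eigenspace_iff] at hv ⊢
    rw [hcomm' v, hv, map_smul]
  have hindep : iSupIndep E := Module.End.eigenspaces_iSupIndep Φ
  -- decomposition of any vector
  have hdecomp : ∀ v : V, ∃ f : K →₀ V, (∀ μ, f μ ∈ E μ) ∧ (f.sum fun _ x => x) = v := by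
    intro v
    have : v ∈ ⨆ μ : K, E μ := by rw [hEdef, hdiag]; trivial
    exact (Submodule.mem_iSup_iff_exists_finsupp E v).mp this
  -- eigenvectors with nonzero eigenvalue killed by Q lie in range Q
  have hrange : ∀ (μ : K), μ ≠ 0 → ∀ x ∈ E μ, Q x = 0 → x ∈ LinearMap.range Q := by
    intro μ hμ x hx hQx
    rw [hEdef, Module.End.mem_eigenspace_iff] at hx
    refine ⟨μ⁻¹ • φ x, ?_⟩
    have hx' : Q (φ x) + φ (Q x) = μ • x := hx
    rw [hQx, map_zero, add_zero] at hx'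
    rw [map_smul, hx', smul_smul, inv_mul_cancel₀ hμ, one_smul]
  -- E 0 = ker Φ
  have hE0 : ∀ x, x ∈ E 0 ↔ Φ x = 0 := by
    intro x; rw [hEdef, Module.End.mem_eigenspace_iff, zero_smul]
  -- (ii)
  have part2 : ∀ v : V, Q v = 0 →
      ∃ w : V, Q w = 0 ∧ Φ w = 0 ∧ v - w ∈ LinearMap.range Q := by
    intro v hv
    obtain ⟨f, hf, hsum⟩ := hdecomp v
    have hQf : ∀ μ, Q (f μ) = 0 := by
      have key := aux_indep_sum_eq_zero E hindep (f.mapRange Q (map_zero Q))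
        (fun μ => by simp only [Finsupp.mapRange_apply]; exact hE μ _ (hf μ)) ?_
      · intro μ; have h := key μ; simpa using h
      · rw [Finsupp.sum_mapRange_index (by simp)]
        have hsum' : ∑ a ∈ f.support, f a = v := hsum
        rw [Finsupp.sum, ← map_sum, hsum', hv]
    refine ⟨f 0, hQf 0, (hE0 _).mp (hf 0), ?_⟩
    have hv' : v - f 0 = ∑ μ ∈ f.support.erase 0, f μ := by
      by_cases h0 : (0 : K) ∈ f.support
      · rw [← hsum, Finsupp.sum, ← Finset.add_sum_erase f.support (fun j => f j) h0]
        abel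
      · rw [Finsupp.notMem_support_iff.mp h0, sub_zero, Finset.erase_eq_of_notMem h0,
          ← hsum, Finsupp.sum]
    rw [hv']
    refine Submodule.sum_mem _ fun μ hμ => ?_
    exact hrange μ (Finset.ne_of_mem_erase hμ) _ (hf μ) (hQf μ)
  -- (iii)
  have part3 : ∀ v : V, Φ v = 0 → v ∈ LinearMap.range Q →
      ∃ u : V, Φ u = 0 ∧ Q u = v := by
    intro v hΦv hv
    obtain ⟨u, rfl⟩ := hv
    obtain ⟨f, hf, hsum⟩ := hdecomp u
    set g : K →₀ V := f.mapRange Q (map_zero Q) with hgdef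
    have hg : ∀ μ, g μ ∈ E μ := fun μ => by
      simp only [hgdef, Finsupp.mapRange_apply]; exact hE μ _ (hf μ)
    have hgsum : g.sum (fun _ x => x) = Q u := by
      have hsum' : ∑ a ∈ f.support, f a = u := hsum
      rw [hgdef, Finsupp.sum_mapRange_index (by simp), Finsupp.sum, ← map_sum, hsum']
    set h : K →₀ V := Finsupp.onFinset g.support (fun μ => μ • g μ)
      (fun μ hμ => Finsupp.mem_support_iff.mpr
        (fun h0 => hμ (show μ • g μ = 0 by rw [h0, smul_zero]))) with hhdef
    have hh : ∀ μ, h μ ∈ E μ := fun μ => by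
      rw [hhdef]
      simp only [Finsupp.onFinset_apply]
      exact Submodule.smul_mem _ _ (hg μ)
    have hhsum : h.sum (fun _ x => x) = 0 := by
      rw [hhdef, Finsupp.onFinset_sum _ (fun _ => rfl)]
      have : ∑ μ ∈ g.support, μ • g μ = Φ (Q u) := by
        rw [← hgsum, Finsupp.sum, map_sum]
        refine Finset.sum_congr rfl fun μ _ => ?_
        exact (Module.End.mem_eigenspace_iff.mp (hg μ)).symm
      rw [this]
      exact hΦv
    have hzero : ∀ μ, μ ≠ 0 → g μ = 0 := by
      intro μ hμ
      have := aux_indep_sum_eq_zero E hindep h hh hhsum μ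
      have this' : μ • g μ = 0 := this
      exact (smul_eq_zero.mp this').resolve_left hμ
    have hQu : Q u = g 0 := by
      rw [← hgsum, Finsupp.sum]
      exact Finset.sum_eq_single 0 (fun b _ hb => hzero b hb)
        (fun h0 => Finsupp.notMem_support_iff.mp h0)
    refine ⟨f 0, (hE0 _).mp (hf 0), ?_⟩
    rw [hQu, hgdef, Finsupp.mapRange_apply]
  -- (iv)
  have hequiv : Nonempty (
      (↥(LinearMap.ker Q ⊓ LinearMap.ker Φ) ⧸
        Submodule.comap (LinearMap.ker Q ⊓ LinearMap.ker Φ).subtype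
          (Submodule.map Q (LinearMap.ker Φ)))
      ≃ₗ[K]
      (↥(LinearMap.ker Q) ⧸
        Submodule.comap (LinearMap.ker Q).subtype (LinearMap.range Q))) := by
    set A : Submodule K V := LinearMap.ker Q ⊓ LinearMap.ker Φ with hAdef
    set C : Submodule K ↥(LinearMap.ker Q) :=
      Submodule.comap (LinearMap.ker Q).subtype (LinearMap.range Q) with hCdef
    set g : ↥A →ₗ[K] ↥(LinearMap.ker Q) ⧸ C :=
      C.mkQ ∘ₗ Submodule.inclusion inf_le_left with hgdef
    have hsurj : Function.Surjective g := by
      intro b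
      obtain ⟨x, rfl⟩ := Submodule.Quotient.mk_surjective C b
      obtain ⟨w, hw1, hw2, hw3⟩ := part2 x (LinearMap.mem_ker.mp x.2)
      refine ⟨⟨w, Submodule.mem_inf.mpr ⟨LinearMap.mem_ker.mpr hw1, LinearMap.mem_ker.mpr hw2⟩⟩, ?_⟩
      have hg1 : g ⟨w, Submodule.mem_inf.mpr ⟨LinearMap.mem_ker.mpr hw1, LinearMap.mem_ker.mpr hw2⟩⟩
          = Submodule.Quotient.mk (⟨w, LinearMap.mem_ker.mpr hw1⟩ : ↥(LinearMap.ker Q)) := rfl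
      rw [hg1, Submodule.Quotient.eq]
      refine Submodule.mem_comap.mpr ?_
      have hco : ((LinearMap.ker Q).subtype)
          ((⟨w, LinearMap.mem_ker.mpr hw1⟩ : ↥(LinearMap.ker Q)) - x) = w - (x : V) := rfl
      rw [hco]
      have h3 := hw3
      rw [show (x : V) - w = -(w - (x : V)) by abel] at h3
      simpa using neg_mem h3
    have hker : LinearMap.ker g = Submodule.comap A.subtype
        (Submodule.map Q (LinearMap.ker Φ)) := by
      ext a
      simp only [hgdef, LinearMap.mem_ker, LinearMap.comp_apply, Submodule.mkQ_apply,
        Submodule.Quotient.mk_eq_zero, Submodule.mem_comap, Submodule.mem_map]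
      constructor
      · intro ha
        have ha' : (a : V) ∈ LinearMap.range Q := ha
        have hΦa : Φ (a : V) = 0 := LinearMap.mem_ker.mp (Submodule.mem_inf.mp a.2).2
        obtain ⟨u, hu1, hu2⟩ := part3 (a : V) hΦa ha'
        exact ⟨u, hu1, hu2⟩
      · rintro ⟨u, _, hu2⟩
        show (a : V) ∈ LinearMap.range Q
        exact ⟨u, hu2⟩
    exact ⟨(Submodule.quotEquivOfEq _ _ hker.symm).trans (g.quotKerEquivOfSurjective hsurj)⟩
  exact ⟨hcomm, hE, part2, part3, hequiv⟩
end

section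
/- Let ℓ ≥ 1, ω a skew-symmetric real (2ℓ)×(2ℓ) matrix, nw_{2ℓ+2} the generalised Nappi–Witten algebra, and B its standard lorentzian form (B(P_i,P_j) = δ_{ij}, B(D,Z) = 1, others zero). Then Z is a nonzero central element with B(Z,Z) = 0 (so nw_{2ℓ+2} is bargmannian); the orthogonal complement Z^⊥ equals the linear span of P₁,…,P_{2ℓ}, Z and is a Lie ideal; the restriction of B to Z^⊥ is positive semidefinite; and its radical is exactly the line ℝ·Z, i.e. for v ∈ Z^⊥ one has B(v,w) = 0 for all w ∈ Z^⊥ if and only if v is a scalar multiple of Z. Hence Z^⊥ is a carrollian Lie algebra. -/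
/-- The underlying vector space of the generalised Nappi–Witten algebra `nw_{2ℓ+2}`:
an element `(p, d, z)` represents `∑ i, p i • Pᵢ + d • D + z • Z`. -/
abbrev NW (ℓ : ℕ) : Type := (Fin (2 * ℓ) → ℝ) × ℝ × ℝ

/-- The bracket of `nw_{2ℓ+2}`, determined by `[Pᵢ, Pⱼ] = ω i j • Z`,
`[D, Pᵢ] = ∑ j, ω i j • Pⱼ`, `Z` central, extended bilinearly. -/
def nwBracket (ℓ : ℕ) (ω : Matrix (Fin (2 * ℓ)) (Fin (2 * ℓ)) ℝ) (x y : NW ℓ) : NW ℓ :=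
  (fun j => x.2.1 * (∑ i, y.1 i * ω i j) - y.2.1 * (∑ i, x.1 i * ω i j),
   0,
   ∑ i, ∑ j, x.1 i * y.1 j * ω i j)

/-- The standard lorentzian form `B` with `B(Pᵢ,Pⱼ) = δᵢⱼ`, `B(D,Z) = 1`, others zero. -/
def nwForm (ℓ : ℕ) (x y : NW ℓ) : ℝ :=
  (∑ i, x.1 i * y.1 i) + x.2.1 * y.2.2 + x.2.2 * y.2.1

/-- in `nw_{2ℓ+2}` with its standard lorentzian form, `Z` is a nonzero
central null element (so `nw_{2ℓ+2}` is bargmannian); the orthogonal complement `Z^⊥`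
is the span of `P₁,…,P_{2ℓ}, Z` (the elements with vanishing `D`-component) and is a
Lie ideal; the restriction of `B` to `Z^⊥` is positive semidefinite; and its radical
is exactly `ℝ • Z`.  Hence `Z^⊥` is a carrollian Lie algebra. -/
theorem nw_is_bargmannian_carrollian_reduction (ℓ : ℕ) (hℓ : 1 ≤ ℓ)
    (ω : Matrix (Fin (2 * ℓ)) (Fin (2 * ℓ)) ℝ) (hskew : ∀ i j, ω j i = - ω i j) :
    ((0, 0, 1) : NW ℓ) ≠ 0 ∧
    (∀ x : NW ℓ, nwBracket ℓ ω (0, 0, 1) x = 0) ∧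
    nwForm ℓ ((0, 0, 1) : NW ℓ) ((0, 0, 1) : NW ℓ) = 0 ∧
    (∀ x : NW ℓ, nwForm ℓ x ((0, 0, 1) : NW ℓ) = 0 ↔ x.2.1 = 0) ∧
    (∀ x y : NW ℓ, x.2.1 = 0 → (nwBracket ℓ ω y x).2.1 = 0) ∧
    (∀ x : NW ℓ, x.2.1 = 0 → 0 ≤ nwForm ℓ x x) ∧
    (∀ v : NW ℓ, v.2.1 = 0 →
      ((∀ w : NW ℓ, w.2.1 = 0 → nwForm ℓ v w = 0) ↔
        ∃ c : ℝ, v = c • ((0, 0, 1) : NW ℓ))) := by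
  refine ⟨?_, ?_, ?_, ?_, ?_, ?_, ?_⟩
  · intro h
    have := congrArg (fun x : NW ℓ => x.2.2) h
    simpa using this
  · intro x
    refine Prod.ext (funext fun j => by simp [nwBracket]) (Prod.ext rfl (by simp [nwBracket]))
  · simp [nwForm]
  · intro x
    simp [nwForm]
  · intro x y hx
    simp [nwBracket]
  · intro x hx
    have : nwForm ℓ x x = ∑ i, x.1 i * x.1 i := by
      simp [nwForm, hx]
    rw [this]
    exact Finset.sum_nonneg fun i _ => mul_self_nonneg _
  · intro v hv
    constructor
    · intro h
      refine ⟨v.2.2, ?_⟩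
      have h1 : ∀ i, v.1 i = 0 := by
        intro i
        have := h (fun j => if j = i then 1 else 0, 0, 0) rfl
        simpa [nwForm, hv] using this
      have hv1 : v.1 = 0 := funext h1
      refine Prod.ext ?_ (Prod.ext ?_ ?_) <;> simp [hv1, hv]
    · rintro ⟨c, rfl⟩ w hw
      simp [nwForm, hw]
end
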